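/- arXiv:2103.11387 — 3 statements merged into one kernel-verified Lean document; each statement's English description precedes it below -/
import Mathlib

section
/- Let D be a double Boolean algebra, T the topology on F_pr(D) having {F_x : x ∈ D} as a subbase of closed sets, and J the topology on I_pr(D) having {I_x : x ∈ D} as a subbase of closed sets. Then (F_pr(D), T) and (I_pr(D), J) are compact and totally disconnected topological spaces; hence both are Hausdorff. -/
universe u v

/-- A double Boolean algebra (dBa). -/
structure DBA (D : Type u) where
  sup : D → D → D
  inf : D → D → D
  neg : D → D
  dneg : D → D
  top : D
  bot : D
  ax1a : ∀ x y, inf (inf x x) y = inf x y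
  ax2a : ∀ x y, inf x y = inf y x
  ax3a : ∀ x y z, inf x (inf y z) = inf (inf x y) z
  ax4a : ∀ x, neg (inf x x) = neg x
  ax5a : ∀ x y, inf x (sup x y) = inf x x
  ax6a : ∀ x y z, inf x (neg (inf (neg y) (neg z))) =
      neg (inf (neg (inf x y)) (neg (inf x z)))
  ax7a : ∀ x y, inf x (neg (inf (neg x) (neg y))) = inf x x
  ax8a : ∀ x y, neg (neg (inf x y)) = inf x y
  ax9a : ∀ x, inf x (neg x) = bot
  ax10a : neg bot = inf top top
  ax11a : neg top = bot
  ax1b : ∀ x y, sup (sup x x) y = sup x y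
  ax2b : ∀ x y, sup x y = sup y x
  ax3b : ∀ x y z, sup x (sup y z) = sup (sup x y) z
  ax4b : ∀ x, dneg (sup x x) = dneg x
  ax5b : ∀ x y, sup x (inf x y) = sup x x
  ax6b : ∀ x y z, sup x (dneg (sup (dneg y) (dneg z))) =
      dneg (sup (dneg (sup x y)) (dneg (sup x z)))
  ax7b : ∀ x y, sup x (dneg (sup (dneg x) (dneg y))) = sup x x
  ax8b : ∀ x y, dneg (dneg (sup x y)) = sup x y
  ax9b : ∀ x, sup x (dneg x) = top
  ax10b : dneg top = sup bot bot
  ax11b : dneg bot = top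
  ax12 : ∀ x, sup (inf x x) (inf x x) = inf (sup x x) (sup x x)

namespace DBA

variable {D : Type u} {E : Type v}

/-- x ∨ y := ¬(¬x ⊓ ¬y) -/
def vee (A : DBA D) (x y : D) : D := A.neg (A.inf (A.neg x) (A.neg y))

/-- x ∧ y := ⌟(⌟x ⊔ ⌟y) -/
def wedge (A : DBA D) (x y : D) : D := A.dneg (A.sup (A.dneg x) (A.dneg y))

/-- The quasi-order ⊑. -/
def le (A : DBA D) (x y : D) : Prop := A.inf x y = A.inf x x ∧ A.sup x y = A.sup y y

def IsFilter (A : DBA D) (F : Set D) : Prop :=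
  (∀ x ∈ F, ∀ y ∈ F, A.inf x y ∈ F) ∧ ∀ x ∈ F, ∀ z, A.le x z → z ∈ F

def IsIdeal (A : DBA D) (I : Set D) : Prop :=
  (∀ x ∈ I, ∀ y ∈ I, A.sup x y ∈ I) ∧ ∀ x ∈ I, ∀ z, A.le z x → z ∈ I

def IsPrimaryFilter (A : DBA D) (F : Set D) : Prop :=
  A.IsFilter F ∧ F ≠ Set.univ ∧ ∀ x, x ∈ F ∨ A.neg x ∈ F

def IsPrimaryIdeal (A : DBA D) (I : Set D) : Prop :=
  A.IsIdeal I ∧ I ≠ Set.univ ∧ ∀ x, x ∈ I ∨ A.dneg x ∈ I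

def Pure (A : DBA D) : Prop := ∀ x, A.inf x x = x ∨ A.sup x x = x

def Contextual (A : DBA D) : Prop := ∀ x y, A.le x y → A.le y x → x = y

def FullyContextual (A : DBA D) : Prop :=
  A.Contextual ∧
    ∀ y x, A.inf y y = y → A.sup x x = x → A.sup y y = A.inf x x →
      ∃! z, A.inf z z = y ∧ A.sup z z = x

/-- D_p = D_⊓ ∪ D_⊔ -/
def Dp (A : DBA D) : Set D := {x | A.inf x x = x} ∪ {x | A.sup x x = x}

def IsHom (A : DBA D) (B : DBA E) (h : D → E) : Prop :=
  (∀ x y, h (A.inf x y) = B.inf (h x) (h y)) ∧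
  (∀ x y, h (A.sup x y) = B.sup (h x) (h y)) ∧
  (∀ x, h (A.neg x) = B.neg (h x)) ∧
  (∀ x, h (A.dneg x) = B.dneg (h x)) ∧
  h A.top = B.top ∧ h A.bot = B.bot

def IsHomOn (A : DBA D) (B : DBA E) (S : Set D) (h : D → E) : Prop :=
  (∀ x ∈ S, ∀ y ∈ S, h (A.inf x y) = B.inf (h x) (h y)) ∧
  (∀ x ∈ S, ∀ y ∈ S, h (A.sup x y) = B.sup (h x) (h y)) ∧
  (∀ x ∈ S, h (A.neg x) = B.neg (h x)) ∧
  (∀ x ∈ S, h (A.dneg x) = B.dneg (h x)) ∧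
  h A.top = B.top ∧ h A.bot = B.bot

end DBA

section FCA

variable {G : Type u} {M : Type v}

/-- B^◇ -/
def odia (R : G → M → Prop) (B : Set M) : Set G := {g | ∃ m ∈ B, R g m}
/-- B^□ -/
def obox (R : G → M → Prop) (B : Set M) : Set G := {g | ∀ m, R g m → m ∈ B}
/-- A^◆ -/
def obdia (R : G → M → Prop) (A : Set G) : Set M := {m | ∃ g ∈ A, R g m}
/-- A^■ -/
def obbox (R : G → M → Prop) (A : Set G) : Set M := {m | ∀ g, R g m → g ∈ A}

def pinf (R : G → M → Prop) (p q : Set G × Set M) : Set G × Set M :=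
  (p.1 ∪ q.1, obbox R (p.1 ∪ q.1))
def psup (R : G → M → Prop) (p q : Set G × Set M) : Set G × Set M :=
  (odia R (p.2 ∩ q.2), p.2 ∩ q.2)
def pneg (R : G → M → Prop) (p : Set G × Set M) : Set G × Set M :=
  (p.1ᶜ, obbox R p.1ᶜ)
def pdneg (R : G → M → Prop) (p : Set G × Set M) : Set G × Set M :=
  (odia R p.2ᶜ, p.2ᶜ)
def ptop : Set G × Set M := (∅, ∅)
def pbot : Set G × Set M := (Set.univ, Set.univ)
/-- quasi-order on pairs: (A,B) ⊑ (C,D) iff C ⊆ A and D ⊆ B -/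
def ple (p q : Set G × Set M) : Prop := q.1 ⊆ p.1 ∧ q.2 ⊆ p.2

/-- object oriented protoconcept -/
def IsProto (R : G → M → Prop) (p : Set G × Set M) : Prop :=
  odia R (obbox R p.1) = odia R p.2
/-- object oriented semiconcept -/
def IsSemi (R : G → M → Prop) (p : Set G × Set M) : Prop :=
  obbox R p.1 = p.2 ∨ odia R p.2 = p.1

/-- continuity of the relation R -/
def ContRel [TopologicalSpace G] [TopologicalSpace M] (R : G → M → Prop) : Prop :=
  ∀ O : Set M, IsOpen O → IsOpen (odia R O) ∧ IsOpen (obox R O)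
/-- continuity of the converse relation R⁻¹ -/
def ContRelInv [TopologicalSpace G] [TopologicalSpace M] (R : G → M → Prop) : Prop :=
  ∀ O : Set G, IsOpen O → IsOpen (obdia R O) ∧ IsOpen (obbox R O)

def IsClopenProto [TopologicalSpace G] [TopologicalSpace M] (R : G → M → Prop)
    (p : Set G × Set M) : Prop :=
  IsProto R p ∧ IsClopen p.1 ∧ IsClopen p.2

def IsClopenSemi [TopologicalSpace G] [TopologicalSpace M] (R : G → M → Prop)
    (p : Set G × Set M) : Prop :=
  IsSemi R p ∧ IsClopen p.1 ∧ IsClopen p.2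

def pmap {G' : Type*} {M' : Type*} (α : G → G') (β : M → M') (p : Set G' × Set M') :
    Set G × Set M := (α ⁻¹' p.1, β ⁻¹' p.2)

end FCA

section StoneDBA

variable {D : Type u}

/-- the set of primary filters of a dBa, as a type -/
def PrimF (A : DBA D) : Type u := {F : Set D // A.IsPrimaryFilter F}
/-- the set of primary ideals of a dBa, as a type -/
def PrimI (A : DBA D) : Type u := {I : Set D // A.IsPrimaryIdeal I}
/-- F ∇ I iff F ∩ I = ∅ -/
def nabla (A : DBA D) : PrimF A → PrimI A → Prop := fun F I => F.val ∩ I.val = ∅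
/-- F_x -/
def Fset (A : DBA D) (x : D) : Set (PrimF A) := {F | x ∈ F.val}
/-- I_x -/
def Iset (A : DBA D) (x : D) : Set (PrimI A) := {I | x ∈ I.val}

/-- the topology T on primary filters, with the F_x as a subbase of closed sets -/
def filtTop (A : DBA D) : TopologicalSpace (PrimF A) :=
  TopologicalSpace.generateFrom {U | ∃ x : D, U = (Fset A x)ᶜ}
/-- the topology J on primary ideals, with the I_x as a subbase of closed sets -/
def idlTop (A : DBA D) : TopologicalSpace (PrimI A) :=
  TopologicalSpace.generateFrom {U | ∃ x : D, U = (Iset A x)ᶜ}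

/-- the map h(x) := (F_{¬x}, I_x) -/
def protoEmb (A : DBA D) (x : D) : Set (PrimF A) × Set (PrimI A) :=
  (Fset A (A.neg x), Iset A x)

end StoneDBA

section SemiPrim

variable {G : Type u} {M : Type v} [TopologicalSpace G] [TopologicalSpace M]

/-- a primary filter of the dBa of clopen object oriented semiconcepts -/
def IsSemiPrimFilter (R : G → M → Prop) (F : Set (Set G × Set M)) : Prop :=
  (∀ p ∈ F, IsClopenSemi R p) ∧
  (∀ p ∈ F, ∀ q ∈ F, pinf R p q ∈ F) ∧
  (∀ p ∈ F, ∀ z, IsClopenSemi R z → ple p z → z ∈ F) ∧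
  F ≠ {p | IsClopenSemi R p} ∧
  (∀ p, IsClopenSemi R p → (p ∈ F ∨ pneg R p ∈ F))

/-- a primary ideal of the dBa of clopen object oriented semiconcepts -/
def IsSemiPrimIdeal (R : G → M → Prop) (I : Set (Set G × Set M)) : Prop :=
  (∀ p ∈ I, IsClopenSemi R p) ∧
  (∀ p ∈ I, ∀ q ∈ I, psup R p q ∈ I) ∧
  (∀ p ∈ I, ∀ z, IsClopenSemi R z → ple z p → z ∈ I) ∧
  I ≠ {p | IsClopenSemi R p} ∧
  (∀ p, IsClopenSemi R p → (p ∈ I ∨ pdneg R p ∈ I))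

def SemiPF (R : G → M → Prop) := {F : Set (Set G × Set M) // IsSemiPrimFilter R F}
def SemiPI (R : G → M → Prop) := {I : Set (Set G × Set M) // IsSemiPrimIdeal R I}

def semiPFTop (R : G → M → Prop) : TopologicalSpace (SemiPF R) :=
  TopologicalSpace.generateFrom
    {U | ∃ p, IsClopenSemi R p ∧ U = {F : SemiPF R | p ∈ F.val}ᶜ}
def semiPITop (R : G → M → Prop) : TopologicalSpace (SemiPI R) :=
  TopologicalSpace.generateFrom
    {U | ∃ p, IsClopenSemi R p ∧ U = {I : SemiPI R | p ∈ I.val}ᶜ}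

end SemiPrim

/-!
A primary filter contains exactly one of `x` and `¬x`, so `F_x` and `F_{¬x}` are complementary
subbasic closed sets; hence every `F_x` is clopen, and two distinct primary filters, which differ
on some `x`, are separated by `F_x` or its complement. For compactness, an ultrafilter `𝔘` on
`F_pr(D)` converges to the primary filter `{x | F_x ∈ 𝔘}`. Primary ideals of `D` are the primary
filters of the dual dBa, obtained by exchanging `⊓, ¬, ⊥` with `⊔, ⌟, ⊤`, so everything transfers.
-/

section MembershipTopology

variable {D : Type*} {P : Set D → Prop}

-- `filtTop A` and `idlTop A` are, by definition, the instances `P = A.IsPrimaryFilter` and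
-- `P = A.IsPrimaryIdeal`.
abbrev membershipTopology (P : Set D → Prop) : TopologicalSpace (Subtype P) :=
  TopologicalSpace.generateFrom {U | ∃ x : D, U = {S | x ∈ S.val}ᶜ}

attribute [local instance] membershipTopology

def IsComplementedFamily (P : Set D → Prop) : Prop :=
  ∀ x : D, ∃ y : D, ∀ S, P S → (x ∈ S ↔ y ∉ S)

def IsUltrafilterClosed (P : Set D → Prop) : Prop :=
  ∀ f : Ultrafilter (Subtype P), P {x | {S : Subtype P | x ∈ S.val} ∈ f}

namespace membershipTopology

theorem isOpen_setOf_notMem (x : D) : IsOpen {S : Subtype P | x ∈ S.val}ᶜ :=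
  .basic _ ⟨x, rfl⟩

theorem isClopen_setOf_mem (hP : IsComplementedFamily P) (x : D) :
    IsClopen {S : Subtype P | x ∈ S.val} := by
  obtain ⟨y, hy⟩ := hP x
  have hxy : {S : Subtype P | x ∈ S.val} = {S : Subtype P | y ∈ S.val}ᶜ :=
    Set.ext fun S => hy S.val S.property
  exact ⟨⟨isOpen_setOf_notMem x⟩, hxy ▸ isOpen_setOf_notMem y⟩

theorem totallySeparatedSpace (hP : IsComplementedFamily P) :
    TotallySeparatedSpace (Subtype P) := by
  rw [totallySeparatedSpace_iff_exists_isClopen]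
  intro S T hST
  obtain ⟨x, hx⟩ : ∃ x, ¬(x ∈ S.val ↔ x ∈ T.val) := by
    simpa only [ne_eq, Subtype.ext_iff, Set.ext_iff, not_forall] using hST
  by_cases hxS : x ∈ S.val
  · exact ⟨_, isClopen_setOf_mem hP x, hxS, fun hxT => hx ⟨fun _ => hxT, fun _ => hxS⟩⟩
  · exact ⟨_, (isClopen_setOf_mem hP x).compl, hxS, fun hxT => hx (iff_of_false hxS hxT)⟩

theorem compactSpace (hP : IsUltrafilterClosed P) : CompactSpace (Subtype P) := by
  rw [← isCompact_univ_iff, isCompact_iff_ultrafilter_le_nhds]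
  refine fun f _ => ⟨⟨_, hP f⟩, Set.mem_univ _, ?_⟩
  rw [TopologicalSpace.nhds_generateFrom]
  refine le_iInf₂ ?_
  rintro _ ⟨hxf, x, rfl⟩
  exact Filter.le_principal_iff.mpr (Ultrafilter.compl_mem_iff_notMem.mpr hxf)

end membershipTopology

end MembershipTopology

namespace DBA

variable {D : Type*} (A : DBA D)

def dual : DBA D where
  sup := A.inf
  inf := A.sup
  neg := A.dneg
  dneg := A.neg
  top := A.bot
  bot := A.top
  ax1a := A.ax1b
  ax2a := A.ax2b
  ax3a := A.ax3b
  ax4a := A.ax4b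
  ax5a := A.ax5b
  ax6a := A.ax6b
  ax7a := A.ax7b
  ax8a := A.ax8b
  ax9a := A.ax9b
  ax10a := A.ax10b
  ax11a := A.ax11b
  ax1b := A.ax1a
  ax2b := A.ax2a
  ax3b := A.ax3a
  ax4b := A.ax4a
  ax5b := A.ax5a
  ax6b := A.ax6a
  ax7b := A.ax7a
  ax8b := A.ax8a
  ax9b := A.ax9a
  ax10b := A.ax10a
  ax11b := A.ax11a
  ax12 x := (A.ax12 x).symm

theorem dual_le {x y : D} : A.dual.le x y ↔ A.le y x := by
  simp only [le, dual, A.ax2a x, A.ax2b x]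
  exact and_comm

theorem isPrimaryFilter_dual : A.dual.IsPrimaryFilter = A.IsPrimaryIdeal := by
  ext I
  simp only [IsPrimaryFilter, IsPrimaryIdeal, IsFilter, IsIdeal, dual_le]
  rfl

theorem inf_inf_idem (a b : D) : A.inf (A.inf a b) (A.inf a b) = A.inf a b :=
  calc A.inf (A.inf a b) (A.inf a b) = A.inf (A.inf (A.inf a b) a) b := A.ax3a _ _ _
    _ = A.inf (A.inf (A.inf a a) b) b := by rw [A.ax2a (A.inf a b) a, A.ax3a]
    _ = A.inf a (A.inf b b) := by rw [A.ax1a, A.ax3a]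
    _ = A.inf a b := by rw [A.ax2a, A.ax1a, A.ax2a]

theorem bot_le (z : D) : A.le A.bot z := by
  rw [← A.ax9a z]
  constructor
  · rw [inf_inf_idem, A.ax2a, A.ax3a, A.ax1a]
  · rw [A.ax2b, A.ax5b]

variable {A} {F : Set D}

theorem IsPrimaryFilter.bot_notMem (hF : A.IsPrimaryFilter F) : A.bot ∉ F := fun hbot =>
  hF.2.1 (Set.eq_univ_of_forall fun z => hF.1.2 _ hbot z (A.bot_le z))

theorem IsPrimaryFilter.mem_iff_neg_notMem (hF : A.IsPrimaryFilter F) (x : D) :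
    x ∈ F ↔ A.neg x ∉ F :=
  ⟨fun hx hnx => hF.bot_notMem (A.ax9a x ▸ hF.1.1 x hx _ hnx), (hF.2.2 x).resolve_right⟩

variable (A)

theorem isComplementedFamily_isPrimaryFilter : IsComplementedFamily A.IsPrimaryFilter :=
  fun x => ⟨A.neg x, fun _ hF => hF.mem_iff_neg_notMem x⟩

theorem isUltrafilterClosed_isPrimaryFilter : IsUltrafilterClosed A.IsPrimaryFilter := by
  intro f
  refine ⟨⟨fun x hx y hy => ?_, fun x hx z hxz => ?_⟩, fun huniv => ?_, fun x => ?_⟩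
  · exact f.mem_of_superset (Filter.inter_mem hx hy) fun F hF => F.2.1.1 x hF.1 y hF.2
  · exact f.mem_of_superset hx fun F hF => F.2.1.2 x hF z hxz
  · have hbot : {F : Subtype A.IsPrimaryFilter | A.bot ∈ F.val} = ∅ :=
      Set.eq_empty_of_forall_notMem fun F => F.2.bot_notMem
    exact f.empty_notMem (hbot ▸ Set.eq_univ_iff_forall.mp huniv A.bot)
  · refine (f.mem_or_compl_mem _).imp_right fun hx => f.mem_of_superset hx fun F hF => ?_
    exact (F.2.mem_iff_neg_notMem x).not_left.mp hF

theorem isComplementedFamily_isPrimaryIdeal : IsComplementedFamily A.IsPrimaryIdeal :=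
  A.isPrimaryFilter_dual ▸ A.dual.isComplementedFamily_isPrimaryFilter

theorem isUltrafilterClosed_isPrimaryIdeal : IsUltrafilterClosed A.IsPrimaryIdeal :=
  A.isPrimaryFilter_dual ▸ A.dual.isUltrafilterClosed_isPrimaryFilter

end DBA

/-- (F_pr(D),T) and (I_pr(D),J) are compact and totally disconnected
(any two distinct points are separated by a clopen set); hence Hausdorff. -/
theorem stmt12 {D : Type u} (A : DBA D) :
    @CompactSpace (PrimF A) (filtTop A) ∧
    (∀ F G : PrimF A, F ≠ G →
      ∃ U : Set (PrimF A), @IsClopen (PrimF A) (filtTop A) U ∧ F ∈ U ∧ G ∉ U) ∧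
    @T2Space (PrimF A) (filtTop A) ∧
    @CompactSpace (PrimI A) (idlTop A) ∧
    (∀ I J : PrimI A, I ≠ J →
      ∃ U : Set (PrimI A), @IsClopen (PrimI A) (idlTop A) U ∧ I ∈ U ∧ J ∉ U) ∧
    @T2Space (PrimI A) (idlTop A) := by
  have hF := membershipTopology.totallySeparatedSpace A.isComplementedFamily_isPrimaryFilter
  have hI := membershipTopology.totallySeparatedSpace A.isComplementedFamily_isPrimaryIdeal
  exact ⟨membershipTopology.compactSpace A.isUltrafilterClosed_isPrimaryFilter,
    fun _ _ h => @exists_isClopen_of_totally_separated _ (filtTop A) hF _ _ h,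
    @TotallySeparatedSpace.t2Space _ (filtTop A) hF,
    membershipTopology.compactSpace A.isUltrafilterClosed_isPrimaryIdeal,
    fun _ _ h => @exists_isClopen_of_totally_separated _ (idlTop A) hI _ _ h,
    @TotallySeparatedSpace.t2Space _ (idlTop A) hI⟩
end

section
/- Let D be a double Boolean algebra and K^T_pr(D) := ((F_pr(D),T),(I_pr(D),J),∇), where F ∇ I iff F ∩ I = ∅. Then K^T_pr(D) is a CTSCR: for every open set O of (I_pr(D),J), the sets O^◇ and O^□ are open in (F_pr(D),T), and for every open set O of (F_pr(D),T), the sets O^◆ and O^■ are open in (I_pr(D),J). -/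
universe u v

/-!
Both subbases consist of clopen sets (`F_{¬x} = F_xᶜ`, `I_{⌟x} = I_xᶜ`), and since primary ideals
are prime for `∧`, the sets `I_xᶜ` even form a basis of `J`. On basic open sets one computes
`(I_xᶜ)^◇ = F_{⌟x}ᶜ` and `(I_xᶜ)^□ = F_{x ⊔ x}`, by separating a primary filter from a principal
ideal with the prime ideal theorem of the distributive lattice `D_⊔`. This makes `O^◇` open at
once. For `F ∈ O^□` the same separation, applied to the ideal `{t | I_tᶜ ⊆ O}`, produces some `x`
with `F ∈ (I_xᶜ)^□ ⊆ O^□`. The statements for `∇⁻¹` are those for `∇` in the dual dBa, in which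
filters and ideals trade places.
-/

section FCA

variable {G M G' M' : Type*}

lemma odia_mono (R : G → M → Prop) {B B' : Set M} (h : B ⊆ B') : odia R B ⊆ odia R B' :=
  fun _ ⟨m, hm, hR⟩ => ⟨m, h hm, hR⟩

lemma obox_mono (R : G → M → Prop) {B B' : Set M} (h : B ⊆ B') : obox R B ⊆ obox R B' :=
  fun _ hg m hR => h (hg m hR)

variable [TopologicalSpace G] [TopologicalSpace M] [TopologicalSpace G'] [TopologicalSpace M']

lemma contRelInv_iff_contRel_flip (R : G → M → Prop) : ContRelInv R ↔ ContRel (flip R) :=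
  Iff.rfl

lemma ContRel.of_homeomorph {R : G → M → Prop} {R' : G' → M' → Prop} (e : G ≃ₜ G')
    (f : M ≃ₜ M') (hR : ∀ g m, R g m ↔ R' (e g) (f m)) (h : ContRel R') : ContRel R := by
  intro O hO
  have hdia : odia R O = e ⁻¹' odia R' (f '' O) := by
    ext g
    simp only [odia, Set.mem_preimage, Set.mem_ofPred_eq, Set.exists_mem_image, hR]
  have hbox : obox R O = e ⁻¹' obox R' (f '' O) := by
    ext g
    simp only [obox, Set.mem_preimage, Set.mem_ofPred_eq, f.surjective.forall, hR,
      f.injective.mem_set_image]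
  obtain ⟨hdia', hbox'⟩ := h _ (f.isOpen_image.2 hO)
  rw [hdia, hbox]
  exact ⟨hdia'.preimage e.continuous, hbox'.preimage e.continuous⟩

end FCA

namespace DBA

variable {D : Type u} (A : DBA D)

lemma sup_idem_right (x y : D) : A.sup x (A.sup y y) = A.sup x y := by
  rw [A.ax2b x (A.sup y y), A.ax1b, A.ax2b]

lemma sup_sup_self (x y : D) : A.sup (A.sup x y) (A.sup x y) = A.sup x y := by
  calc A.sup (A.sup x y) (A.sup x y) = A.sup (A.sup (A.sup x y) x) y := A.ax3b ..
    _ = A.sup (A.sup x (A.sup x y)) y := by rw [← A.ax3b x y x, A.ax2b y x]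
    _ = A.sup (A.sup x y) y := by rw [A.ax3b x x y, A.ax1b]
    _ = A.sup x y := by rw [← A.ax3b, A.sup_idem_right]

lemma dneg_dneg (x : D) : A.dneg (A.dneg x) = A.sup x x := by
  rw [← A.ax4b x, A.ax8b]

lemma dneg_idem (x : D) : A.sup (A.dneg x) (A.dneg x) = A.dneg x := by
  rw [← A.dneg_dneg (A.dneg x), A.dneg_dneg x, A.ax4b]

lemma sup_top (x : D) : A.sup x A.top = A.top := by
  conv_lhs => rw [← A.ax9b x]
  rw [A.ax3b, A.ax1b, A.ax9b]

lemma sup_bot (x : D) : A.sup x A.bot = A.sup x x := by rw [← A.ax9a x, A.ax5b]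

lemma inf_top (x : D) : A.inf x A.top = A.inf x x := by rw [← A.ax9b x, A.ax5a]

lemma le_top (x : D) : A.le x A.top :=
  ⟨A.inf_top x, by rw [A.sup_top, A.sup_top]⟩

lemma le_sup_left (x y : D) : A.le x (A.sup x y) :=
  ⟨A.ax5a x y, by rw [A.ax3b, A.ax1b, A.sup_sup_self]⟩

lemma le_of_sup_eq {x b : D} (hb : A.sup b b = b) (h : A.sup x b = b) : A.le x b := by
  refine ⟨?_, by rw [h, hb]⟩
  conv_lhs => rw [← h]
  exact A.ax5a ..

lemma wedge_le_sup_self (x y : D) : A.le (A.wedge x y) (A.sup x x) :=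
  A.le_of_sup_eq (A.sup_sup_self x x) (by rw [A.ax2b, A.ax1b, wedge, A.ax7b])

def op : DBA D where
  sup := A.inf
  inf := A.sup
  neg := A.dneg
  dneg := A.neg
  top := A.bot
  bot := A.top
  ax1a := A.ax1b
  ax2a := A.ax2b
  ax3a := A.ax3b
  ax4a := A.ax4b
  ax5a := A.ax5b
  ax6a := A.ax6b
  ax7a := A.ax7b
  ax8a := A.ax8b
  ax9a := A.ax9b
  ax10a := A.ax10b
  ax11a := A.ax11b
  ax1b := A.ax1a
  ax2b := A.ax2a
  ax3b := A.ax3a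
  ax4b := A.ax4a
  ax5b := A.ax5a
  ax6b := A.ax6a
  ax7b := A.ax7a
  ax8b := A.ax8a
  ax9b := A.ax9a
  ax10b := A.ax10a
  ax11b := A.ax11a
  ax12 := fun x => (A.ax12 x).symm

lemma op_le {x y : D} : A.op.le x y ↔ A.le y x := by
  show A.sup x y = A.sup x x ∧ A.inf x y = A.inf y y ↔ _
  rw [A.ax2b x y, A.ax2a x y, and_comm]
  rfl

lemma op_isIdeal {S : Set D} : A.op.IsIdeal S ↔ A.IsFilter S := by
  simp only [IsIdeal, IsFilter, op_le]
  rfl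

lemma op_isPrimaryIdeal {S : Set D} : A.op.IsPrimaryIdeal S ↔ A.IsPrimaryFilter S :=
  and_congr A.op_isIdeal Iff.rfl

lemma op_isPrimaryFilter {S : Set D} : A.op.IsPrimaryFilter S ↔ A.IsPrimaryIdeal S := by
  simp only [IsPrimaryFilter, IsPrimaryIdeal, IsFilter, IsIdeal, op_le]
  rfl

variable {A}

lemma IsIdeal.sup_mem_iff {I : Set D} (hI : A.IsIdeal I) {x y : D} :
    A.sup x y ∈ I ↔ x ∈ I ∧ y ∈ I := by
  refine ⟨fun h => ⟨hI.2 _ h x (A.le_sup_left x y), hI.2 _ h y ?_⟩, fun h => hI.1 x h.1 y h.2⟩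
  simpa only [A.ax2b x y] using A.le_sup_left y x

lemma IsPrimaryIdeal.top_notMem {I : Set D} (hI : A.IsPrimaryIdeal I) : A.top ∉ I :=
  fun h => hI.2.1 (Set.eq_univ_of_forall fun z => hI.1.2 A.top h z (A.le_top z))

lemma IsPrimaryIdeal.bot_mem {I : Set D} (hI : A.IsPrimaryIdeal I) : A.bot ∈ I := by
  simpa only [A.ax11b, hI.top_notMem, or_false] using hI.2.2 A.bot

lemma IsPrimaryIdeal.dneg_mem_iff {I : Set D} (hI : A.IsPrimaryIdeal I) {x : D} :
    A.dneg x ∈ I ↔ x ∉ I := by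
  refine ⟨fun hdx hx => hI.top_notMem ?_, (hI.2.2 x).resolve_left⟩
  rw [← A.ax9b x]
  exact hI.1.1 x hx _ hdx

lemma IsPrimaryIdeal.wedge_mem_iff {I : Set D} (hI : A.IsPrimaryIdeal I) {x y : D} :
    A.wedge x y ∈ I ↔ x ∈ I ∨ y ∈ I := by
  constructor
  · intro h
    by_contra! hxy
    have hdd : A.sup (A.dneg x) (A.dneg y) ∈ I :=
      hI.1.1 _ (hI.dneg_mem_iff.2 hxy.1) _ (hI.dneg_mem_iff.2 hxy.2)
    exact hI.top_notMem (by simpa only [wedge, A.ax9b] using hI.1.1 _ hdd _ h)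
  · rintro (hx | hy)
    · exact hI.1.2 _ (hI.1.1 x hx x hx) _ (A.wedge_le_sup_self x y)
    · rw [wedge, A.ax2b, ← wedge]
      exact hI.1.2 _ (hI.1.1 y hy y hy) _ (A.wedge_le_sup_self y x)

lemma IsPrimaryFilter.neg_mem_iff {F : Set D} (hF : A.IsPrimaryFilter F) {x : D} :
    A.neg x ∈ F ↔ x ∉ F :=
  (A.op_isPrimaryIdeal.2 hF).dneg_mem_iff

lemma IsPrimaryFilter.nonempty {F : Set D} (hF : A.IsPrimaryFilter F) : F.Nonempty :=
  (hF.2.2 A.top).elim (fun h => ⟨_, h⟩) (fun h => ⟨_, h⟩)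

variable (A)

-- The Boolean algebra `D_⊔` of `⊔`-idempotents, with meet `∧`.
def Dsup : Type u := {a : D // A.sup a a = a}

instance : PartialOrder A.Dsup where
  le a b := A.sup a.1 b.1 = b.1
  le_refl a := a.2
  le_trans a b c hab hbc := by
    show A.sup a.1 c.1 = c.1
    rw [← hbc, A.ax3b, hab]
  le_antisymm a b hab hba := Subtype.ext (by rw [← hba, A.ax2b]; exact hab)

instance : Lattice A.Dsup where
  sup a b := ⟨A.sup a.1 b.1, A.sup_sup_self ..⟩
  le_sup_left a b := show A.sup a.1 (A.sup a.1 b.1) = A.sup a.1 b.1 by rw [A.ax3b, A.ax1b]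
  le_sup_right a b := show A.sup b.1 (A.sup a.1 b.1) = A.sup a.1 b.1 by
    rw [A.ax2b a.1 b.1, A.ax3b, A.ax1b]
  sup_le a b c hac hbc := show A.sup (A.sup a.1 b.1) c.1 = c.1 by rw [← A.ax3b, hbc, hac]
  inf a b := ⟨A.wedge a.1 b.1, A.dneg_idem _⟩
  inf_le_left a b := show A.sup (A.wedge a.1 b.1) a.1 = a.1 by
    rw [A.ax2b, wedge, A.ax7b, a.2]
  inf_le_right a b := show A.sup (A.wedge a.1 b.1) b.1 = b.1 by
    rw [A.ax2b, wedge, A.ax2b (A.dneg a.1), A.ax7b, b.2]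
  le_inf a b c hab hac := show A.sup a.1 (A.wedge b.1 c.1) = A.wedge b.1 c.1 by
    rw [wedge, A.ax6b, ← wedge, ← wedge, hab, hac]

instance : DistribLattice A.Dsup where
  le_sup_inf x y z := le_of_eq <| Subtype.ext <| by
    show A.wedge (A.sup x.1 y.1) (A.sup x.1 z.1) = A.sup x.1 (A.wedge y.1 z.1)
    rw [wedge, wedge, ← A.ax6b]

instance : OrderBot A.Dsup where
  bot := ⟨A.sup A.bot A.bot, A.sup_sup_self ..⟩
  bot_le a := show A.sup (A.sup A.bot A.bot) a.1 = a.1 by rw [A.ax1b, A.ax2b, A.sup_bot, a.2]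

def toDsup (x : D) : A.Dsup := ⟨A.sup x x, A.sup_sup_self x x⟩

lemma toDsup_le_toDsup_iff {x y : D} : A.toDsup x ≤ A.toDsup y ↔ A.sup x y = A.sup y y := by
  show A.sup (A.sup x x) (A.sup y y) = A.sup y y ↔ _
  rw [A.ax1b, A.sup_idem_right]

lemma toDsup_sup (x y : D) : A.toDsup (A.sup x y) = A.toDsup x ⊔ A.toDsup y :=
  Subtype.ext <| show A.sup (A.sup x y) (A.sup x y) = A.sup (A.sup x x) (A.sup y y) by
    rw [A.sup_sup_self, A.ax1b, A.sup_idem_right]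

lemma toDsup_val (a : A.Dsup) : A.toDsup a.1 = a := Subtype.ext a.2

lemma toDsup_inf_toDsup_dneg (x : D) : A.toDsup x ⊓ A.toDsup (A.dneg x) = ⊥ :=
  Subtype.ext <| show A.wedge (A.sup x x) (A.sup (A.dneg x) (A.dneg x)) = A.sup A.bot A.bot by
    rw [wedge, A.ax4b, A.ax4b, A.dneg_dneg, A.ax2b, A.ax1b, A.ax9b, A.ax10b]

variable {A}

lemma IsFilter.isPFilter_toDsup {F : Set D} (hF : A.IsFilter F) (hne : F.Nonempty) :
    Order.IsPFilter {a : A.Dsup | ∃ f ∈ F, A.toDsup f ≤ a} := by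
  refine Order.IsPFilter.of_def ?_ ?_ ?_
  · obtain ⟨f, hf⟩ := hne
    exact ⟨_, f, hf, le_rfl⟩
  · rintro a ⟨f, hf, hfa⟩ b ⟨g, hg, hgb⟩
    have hfg : A.toDsup (A.inf f g) ≤ A.toDsup f := A.toDsup_le_toDsup_iff.2 (by
      rw [A.ax2b, A.ax5b])
    have hgf : A.toDsup (A.inf f g) ≤ A.toDsup g := A.toDsup_le_toDsup_iff.2 (by
      rw [A.ax2b, A.ax2a, A.ax5b])
    exact ⟨_, ⟨_, hF.1 f hf g hg, le_rfl⟩, hfg.trans hfa, hgf.trans hgb⟩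
  · rintro a b hab ⟨f, hf, hfa⟩
    exact ⟨f, hf, hfa.trans hab⟩

lemma IsIdeal.isIdeal_toDsup {I : Set D} (hI : A.IsIdeal I) (hne : I.Nonempty) :
    Order.IsIdeal {a : A.Dsup | ∃ i ∈ I, a ≤ A.toDsup i} := by
  refine ⟨fun a b hba ⟨i, hi, hai⟩ => ⟨i, hi, hba.trans hai⟩, ?_, ?_⟩
  · obtain ⟨i, hi⟩ := hne
    exact ⟨_, i, hi, le_rfl⟩
  · rintro a ⟨i, hi, hai⟩ b ⟨j, hj, hbj⟩
    refine ⟨_, ⟨_, hI.1 i hi j hj, le_rfl⟩, ?_, ?_⟩ <;> rw [A.toDsup_sup]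
    exacts [le_sup_of_le_left hai, le_sup_of_le_right hbj]

lemma IsIdeal.mem_of_toDsup_le {I : Set D} (hI : A.IsIdeal I) {x i : D} (hi : i ∈ I)
    (h : A.toDsup x ≤ A.toDsup i) : x ∈ I :=
  hI.2 _ (hI.1 i hi i hi) x
    (A.le_of_sup_eq (A.sup_sup_self i i) (by rw [A.sup_idem_right, A.toDsup_le_toDsup_iff.1 h]))

lemma isPrimaryIdeal_preimage_toDsup (J : Order.Ideal A.Dsup) [J.IsPrime] :
    A.IsPrimaryIdeal {x | A.toDsup x ∈ J} := by
  refine ⟨⟨fun x hx y hy => ?_, fun x hx z hzx => ?_⟩, ?_, fun x => ?_⟩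
  · rw [Set.mem_ofPred_eq, A.toDsup_sup]
    exact J.sup_mem hx hy
  · exact J.lower (A.toDsup_le_toDsup_iff.2 hzx.2) hx
  · intro huniv
    obtain ⟨a, ha⟩ := (Set.ne_univ_iff_exists_notMem _).1 (Order.Ideal.IsProper.ne_univ (I := J))
    have : a.1 ∈ {x | A.toDsup x ∈ J} := huniv ▸ Set.mem_univ _
    exact ha (A.toDsup_val a ▸ this)
  · refine Order.Ideal.IsPrime.mem_or_mem ‹_› ?_
    rw [A.toDsup_inf_toDsup_dneg]
    exact J.bot_mem

-- The prime ideal theorem, transported along `x ↦ x ⊔ x` from the distributive lattice `D_⊔`.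
theorem exists_isPrimaryIdeal_of_disjoint {F I₀ : Set D} (hF : A.IsFilter F) (hFne : F.Nonempty)
    (hI₀ : A.IsIdeal I₀) (hI₀ne : I₀.Nonempty) (hdisj : Disjoint F I₀) :
    ∃ I, A.IsPrimaryIdeal I ∧ I₀ ⊆ I ∧ Disjoint F I := by
  have hdisj' : Disjoint ((hF.isPFilter_toDsup hFne).toPFilter : Set A.Dsup)
      ((hI₀.isIdeal_toDsup hI₀ne).toIdeal : Set A.Dsup) := by
    rw [Set.disjoint_left]
    rintro a ⟨f, hf, hfa⟩ ⟨i, hi, hai⟩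
    exact Set.disjoint_left.1 hdisj hf (hI₀.mem_of_toDsup_le hi (hfa.trans hai))
  obtain ⟨J, hJ, hI₀J, hFJ⟩ := DistribLattice.prime_ideal_of_disjoint_filter_ideal hdisj'
  refine ⟨_, isPrimaryIdeal_preimage_toDsup J, fun i hi => hI₀J ⟨i, hi, le_rfl⟩, ?_⟩
  exact Set.disjoint_left.2 fun f hf hfJ => Set.disjoint_left.1 hFJ ⟨f, hf, le_rfl⟩ hfJ

lemma isIdeal_setOf_sup_eq (b : D) : A.IsIdeal {z | A.sup z b = b} := by
  refine ⟨fun x hx y hy => ?_, fun x hx z hzx => ?_⟩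
  · show A.sup (A.sup x y) b = b
    rw [← A.ax3b, hy, hx]
  · show A.sup z b = b
    rw [← hx, A.ax3b, hzx.2, A.ax1b]

lemma IsPrimaryFilter.exists_isPrimaryIdeal_mem_disjoint_iff {F : Set D}
    (hF : A.IsPrimaryFilter F) {b : D} (hb : A.sup b b = b) :
    (∃ I, A.IsPrimaryIdeal I ∧ b ∈ I ∧ Disjoint F I) ↔ b ∉ F := by
  constructor
  · rintro ⟨I, -, hbI, hFI⟩ hbF
    exact Set.disjoint_left.1 hFI hbF hbI
  · intro hbF
    have hdisj : Disjoint F {z | A.sup z b = b} :=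
      Set.disjoint_left.2 fun z hzF hzb => hbF (hF.1.2 z hzF b (A.le_of_sup_eq hb hzb))
    obtain ⟨I, hI, hbI, hFI⟩ :=
      exists_isPrimaryIdeal_of_disjoint hF.1 hF.nonempty (isIdeal_setOf_sup_eq b) ⟨b, hb⟩ hdisj
    exact ⟨I, hI, hbI hb, hFI⟩

lemma nabla_iff {F : PrimF A} {I : PrimI A} : nabla A F I ↔ Disjoint F.1 I.1 :=
  Set.disjoint_iff_inter_eq_empty.symm

lemma Fset_neg (x : D) : Fset A (A.neg x) = (Fset A x)ᶜ :=
  Set.ext fun F => F.2.neg_mem_iff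

lemma Iset_wedge (x y : D) : Iset A (A.wedge x y) = Iset A x ∪ Iset A y :=
  Set.ext fun I => I.2.wedge_mem_iff

lemma Iset_top : Iset A A.top = ∅ :=
  Set.eq_empty_of_forall_notMem fun I => I.2.top_notMem

lemma odia_nabla_compl_Iset (x : D) :
    odia (nabla A) (Iset A x)ᶜ = (Fset A (A.dneg x))ᶜ := by
  ext F
  show _ ↔ A.dneg x ∉ F.1
  rw [← (F.2.exists_isPrimaryIdeal_mem_disjoint_iff (A.dneg_idem x))]
  constructor
  · rintro ⟨I, hxI, hFI⟩
    exact ⟨I.1, I.2, I.2.dneg_mem_iff.2 hxI, nabla_iff.1 hFI⟩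
  · rintro ⟨I, hI, hxI, hFI⟩
    exact ⟨⟨I, hI⟩, hI.dneg_mem_iff.1 hxI, nabla_iff.2 hFI⟩

lemma obox_nabla_compl_Iset (x : D) :
    obox (nabla A) (Iset A x)ᶜ = Fset A (A.sup x x) := by
  ext F
  show (∀ I, nabla A F I → x ∉ I.1) ↔ A.sup x x ∈ F.1
  rw [← not_not (a := A.sup x x ∈ F.1),
    ← (F.2.exists_isPrimaryIdeal_mem_disjoint_iff (A.sup_sup_self x x))]
  simp only [not_exists, not_and]
  constructor
  · intro h I hI hxI hFI
    exact h ⟨I, hI⟩ (nabla_iff.2 hFI) ((hI.1.sup_mem_iff.1 hxI).1)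
  · intro h I hFI hxI
    exact h I.1 I.2 (I.2.1.1 x hxI x hxI) (nabla_iff.1 hFI)

lemma isIdeal_setOf_compl_Iset_subset (O : Set (PrimI A)) :
    A.IsIdeal {t | (Iset A t)ᶜ ⊆ O} := by
  refine ⟨fun x hx y hy I hxyI => ?_, fun x hx z hzx I hzI => hx fun hxI => hzI ?_⟩
  · by_cases hxI : x ∈ I.1
    · exact hy fun hyI => hxyI (I.2.1.1 x hxI y hyI)
    · exact hx hxI
  · exact I.2.1.2 x hxI z hzx

section Topology

attribute [local instance] filtTop idlTop

variable (A)

lemma isOpen_compl_Fset (x : D) : IsOpen (Fset A x)ᶜ :=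
  TopologicalSpace.isOpen_generateFrom_of_mem ⟨x, rfl⟩

lemma isOpen_Fset (x : D) : IsOpen (Fset A x) := by
  rw [← compl_compl (Fset A x), ← Fset_neg]
  exact isOpen_compl_Fset A _

lemma isTopologicalBasis_compl_Iset :
    TopologicalSpace.IsTopologicalBasis {U : Set (PrimI A) | ∃ x, U = (Iset A x)ᶜ} :=
  TopologicalSpace.isTopologicalBasis_of_subbasis_of_finiteInter rfl
    { univ_mem := ⟨A.top, by rw [Iset_top, Set.compl_empty]⟩
      inter_mem := by
        rintro _ ⟨x, rfl⟩ _ ⟨y, rfl⟩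
        exact ⟨A.wedge x y, by rw [Iset_wedge, Set.compl_union]⟩ }

variable {A}

lemma exists_compl_Iset_subset {O : Set (PrimI A)} (hO : IsOpen O) {I : PrimI A} (hI : I ∈ O) :
    ∃ x, x ∉ I.1 ∧ (Iset A x)ᶜ ⊆ O := by
  obtain ⟨_, ⟨x, rfl⟩, hIx, hxO⟩ :=
    (isTopologicalBasis_compl_Iset A).exists_subset_of_mem_open hI hO
  exact ⟨x, hIx, hxO⟩

-- A compactness argument: the ideal `{t | I_tᶜ ⊆ O}` has to meet `F`.
lemma exists_mem_compl_Iset_subset_of_mem_obox {O : Set (PrimI A)} (hO : IsOpen O) {F : PrimF A}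
    (hF : F ∈ obox (nabla A) O) : ∃ x ∈ F.1, (Iset A x)ᶜ ⊆ O := by
  by_contra! h
  have hbot : A.bot ∈ {t | (Iset A t)ᶜ ⊆ O} := fun I hI => absurd I.2.bot_mem hI
  obtain ⟨I, hI, hOI, hFI⟩ := exists_isPrimaryIdeal_of_disjoint F.2.1 F.2.nonempty
    (isIdeal_setOf_compl_Iset_subset O) ⟨_, hbot⟩ (Set.disjoint_left.2 h)
  obtain ⟨x, hxI, hxO⟩ := exists_compl_Iset_subset hO (hF ⟨I, hI⟩ (nabla_iff.2 hFI))
  exact hxI (hOI hxO)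

variable (A)

theorem contRel_nabla : ContRel (nabla A) := by
  intro O hO
  constructor
  · refine isOpen_iff_forall_mem_open.2 ?_
    rintro F ⟨I, hIO, hFI⟩
    obtain ⟨x, hxI, hxO⟩ := exists_compl_Iset_subset hO hIO
    refine ⟨_, odia_mono _ hxO, ?_, I, hxI, hFI⟩
    rw [odia_nabla_compl_Iset]
    exact isOpen_compl_Fset A _
  · refine isOpen_iff_forall_mem_open.2 fun F hF => ?_
    obtain ⟨x, hxF, hxO⟩ := exists_mem_compl_Iset_subset_of_mem_obox hO hF
    refine ⟨_, obox_mono _ hxO, ?_, ?_⟩ <;> rw [obox_nabla_compl_Iset]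
    · exact isOpen_Fset A _
    · exact F.2.1.2 x hxF _ (A.le_sup_left x x)

def primIHomeomorphOp : PrimI A ≃ₜ PrimF A.op where
  toEquiv := Equiv.subtypeEquivRight fun _ => A.op_isPrimaryFilter.symm
  continuous_toFun := continuous_generateFrom_iff.2 <| by
    rintro _ ⟨x, rfl⟩; exact TopologicalSpace.isOpen_generateFrom_of_mem ⟨x, rfl⟩
  continuous_invFun := continuous_generateFrom_iff.2 <| by
    rintro _ ⟨x, rfl⟩; exact TopologicalSpace.isOpen_generateFrom_of_mem ⟨x, rfl⟩

def primFHomeomorphOp : PrimF A ≃ₜ PrimI A.op where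
  toEquiv := Equiv.subtypeEquivRight fun _ => A.op_isPrimaryIdeal.symm
  continuous_toFun := continuous_generateFrom_iff.2 <| by
    rintro _ ⟨x, rfl⟩; exact TopologicalSpace.isOpen_generateFrom_of_mem ⟨x, rfl⟩
  continuous_invFun := continuous_generateFrom_iff.2 <| by
    rintro _ ⟨x, rfl⟩; exact TopologicalSpace.isOpen_generateFrom_of_mem ⟨x, rfl⟩

theorem contRelInv_nabla : ContRelInv (nabla A) :=
  (contRelInv_iff_contRel_flip _).2 <|
    (contRel_nabla A.op).of_homeomorph (R' := nabla A.op) (primIHomeomorphOp A)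
      (primFHomeomorphOp A) fun I F => show F.1 ∩ I.1 = ∅ ↔ I.1 ∩ F.1 = ∅ by rw [Set.inter_comm]

end Topology

end DBA

/-- K^T_pr(D) is a CTSCR: ∇ and ∇⁻¹ are continuous. -/
theorem stmt13 {D : Type u} (A : DBA D) :
    (∀ O : Set (PrimI A), @IsOpen (PrimI A) (idlTop A) O →
      @IsOpen (PrimF A) (filtTop A) (odia (nabla A) O) ∧
      @IsOpen (PrimF A) (filtTop A) (obox (nabla A) O)) ∧
    (∀ O : Set (PrimF A), @IsOpen (PrimF A) (filtTop A) O →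
      @IsOpen (PrimI A) (idlTop A) (obdia (nabla A) O) ∧
      @IsOpen (PrimI A) (idlTop A) (obbox (nabla A) O)) :=
  ⟨DBA.contRel_nabla A, DBA.contRelInv_nabla A⟩
end

section
/- Let M and D be double Boolean algebras and h: M → D a dBa quasi-isomorphism. Define α_h: F_pr(D) → F_pr(M) by α_h(F) := h⁻¹(F) and β_h: I_pr(D) → I_pr(M) by β_h(I) := h⁻¹(I). Then (α_h, β_h) is a CTSCR-homeomorphism from K^T_pr(D) to K^T_pr(M): α_h and β_h are well-defined homeomorphisms (with respect to the topologies T and J on each side) and F ∇ I ⟺ α_h(F) ∇ β_h(I) for all F ∈ F_pr(D), I ∈ I_pr(D). -/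
universe u v

section Stmt14Aux

variable {M : Type u} {D : Type v} (Am : DBA M) (Ad : DBA D) (h : M → D)

lemma stmt14_le_refl (A : DBA M) (x : M) : A.le x x := ⟨rfl, rfl⟩

lemma stmt14_sat (hqi : ∀ x y : M, Am.le x y ↔ Ad.le (h x) (h y))
    {x y : M} (hxy : h x = h y) : Am.le x y ∧ Am.le y x := by
  constructor
  · exact (hqi x y).2 (by rw [hxy]; exact ⟨rfl, rfl⟩)
  · exact (hqi y x).2 (by rw [hxy]; exact ⟨rfl, rfl⟩)

lemma stmt14_preim_pf (hhom : DBA.IsHom Am Ad h) (hsurj : Function.Surjective h)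
    (hqi : ∀ x y : M, Am.le x y ↔ Ad.le (h x) (h y))
    {F : Set D} (hF : Ad.IsPrimaryFilter F) : Am.IsPrimaryFilter (h ⁻¹' F) := by
  obtain ⟨⟨hFinf, hFup⟩, hFpr, hFprim⟩ := hF
  refine ⟨⟨?_, ?_⟩, ?_, ?_⟩
  · intro x hx y hy
    show h (Am.inf x y) ∈ F
    rw [hhom.1]
    exact hFinf _ hx _ hy
  · intro x hx z hxz
    exact hFup _ hx _ ((hqi x z).1 hxz)
  · intro hcon
    have : ∃ y, y ∉ F := by
      by_contra h'
      push_neg at h'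
      exact hFpr (Set.eq_univ_of_forall h')
    obtain ⟨y, hy⟩ := this
    obtain ⟨x, rfl⟩ := hsurj y
    exact hy (Set.eq_univ_iff_forall.1 hcon x)
  · intro x
    rcases hFprim (h x) with hx | hx
    · exact Or.inl hx
    · right
      show h (Am.neg x) ∈ F
      rw [hhom.2.2.1]
      exact hx

lemma stmt14_im_pf (hhom : DBA.IsHom Am Ad h) (hsurj : Function.Surjective h)
    (hqi : ∀ x y : M, Am.le x y ↔ Ad.le (h x) (h y))
    {G : Set M} (hG : Am.IsPrimaryFilter G) : Ad.IsPrimaryFilter (h '' G) := by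
  obtain ⟨⟨hGinf, hGup⟩, hGpr, hGprim⟩ := hG
  refine ⟨⟨?_, ?_⟩, ?_, ?_⟩
  · rintro _ ⟨x, hx, rfl⟩ _ ⟨y, hy, rfl⟩
    exact ⟨Am.inf x y, hGinf _ hx _ hy, hhom.1 x y⟩
  · rintro _ ⟨x, hx, rfl⟩ z hz
    obtain ⟨w, rfl⟩ := hsurj z
    exact ⟨w, hGup _ hx _ ((hqi x w).2 hz), rfl⟩
  · intro hcon
    have : ∃ x, x ∉ G := by
      by_contra h'
      push_neg at h'
      exact hGpr (Set.eq_univ_of_forall h')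
    obtain ⟨x, hx⟩ := this
    have : h x ∈ h '' G := by rw [hcon]; exact Set.mem_univ _
    obtain ⟨b, hb, hbx⟩ := this
    exact hx (hGup _ hb _ (stmt14_sat Am Ad h hqi hbx).1)
  · intro y
    obtain ⟨x, rfl⟩ := hsurj y
    rcases hGprim x with hx | hx
    · exact Or.inl ⟨x, hx, rfl⟩
    · exact Or.inr ⟨Am.neg x, hx, hhom.2.2.1 x⟩

lemma stmt14_preim_pi (hhom : DBA.IsHom Am Ad h) (hsurj : Function.Surjective h)
    (hqi : ∀ x y : M, Am.le x y ↔ Ad.le (h x) (h y))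
    {F : Set D} (hF : Ad.IsPrimaryIdeal F) : Am.IsPrimaryIdeal (h ⁻¹' F) := by
  obtain ⟨⟨hFinf, hFup⟩, hFpr, hFprim⟩ := hF
  refine ⟨⟨?_, ?_⟩, ?_, ?_⟩
  · intro x hx y hy
    show h (Am.sup x y) ∈ F
    rw [hhom.2.1]
    exact hFinf _ hx _ hy
  · intro x hx z hxz
    exact hFup _ hx _ ((hqi z x).1 hxz)
  · intro hcon
    have : ∃ y, y ∉ F := by
      by_contra h'
      push_neg at h'
      exact hFpr (Set.eq_univ_of_forall h')
    obtain ⟨y, hy⟩ := this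
    obtain ⟨x, rfl⟩ := hsurj y
    exact hy (Set.eq_univ_iff_forall.1 hcon x)
  · intro x
    rcases hFprim (h x) with hx | hx
    · exact Or.inl hx
    · right
      show h (Am.dneg x) ∈ F
      rw [hhom.2.2.2.1]
      exact hx

lemma stmt14_im_pi (hhom : DBA.IsHom Am Ad h) (hsurj : Function.Surjective h)
    (hqi : ∀ x y : M, Am.le x y ↔ Ad.le (h x) (h y))
    {G : Set M} (hG : Am.IsPrimaryIdeal G) : Ad.IsPrimaryIdeal (h '' G) := by
  obtain ⟨⟨hGinf, hGup⟩, hGpr, hGprim⟩ := hG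
  refine ⟨⟨?_, ?_⟩, ?_, ?_⟩
  · rintro _ ⟨x, hx, rfl⟩ _ ⟨y, hy, rfl⟩
    exact ⟨Am.sup x y, hGinf _ hx _ hy, hhom.2.1 x y⟩
  · rintro _ ⟨x, hx, rfl⟩ z hz
    obtain ⟨w, rfl⟩ := hsurj z
    exact ⟨w, hGup _ hx _ ((hqi w x).2 hz), rfl⟩
  · intro hcon
    have : ∃ x, x ∉ G := by
      by_contra h'
      push_neg at h'
      exact hGpr (Set.eq_univ_of_forall h')
    obtain ⟨x, hx⟩ := this
    have : h x ∈ h '' G := by rw [hcon]; exact Set.mem_univ _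
    obtain ⟨b, hb, hbx⟩ := this
    exact hx (hGup _ hb _ (stmt14_sat Am Ad h hqi hbx).2)
  · intro y
    obtain ⟨x, rfl⟩ := hsurj y
    rcases hGprim x with hx | hx
    · exact Or.inl ⟨x, hx, rfl⟩
    · exact Or.inr ⟨Am.dneg x, hx, hhom.2.2.2.1 x⟩

end Stmt14Aux

/-- A dBa quasi-isomorphism h : M → D induces, via the preimage maps
α_h(F) := h⁻¹(F) and β_h(I) := h⁻¹(I), a CTSCR-homeomorphism from K^T_pr(D) to
K^T_pr(M). -/
theorem stmt14 {M : Type u} {D : Type v} (Am : DBA M) (Ad : DBA D) (h : M → D)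
    (hhom : DBA.IsHom Am Ad h) (hsurj : Function.Surjective h)
    (hqi : ∀ x y : M, Am.le x y ↔ Ad.le (h x) (h y)) :
    ∃ (e : PrimF Ad ≃ PrimF Am) (e' : PrimI Ad ≃ PrimI Am),
      (∀ F : PrimF Ad, (e F).val = h ⁻¹' F.val) ∧
      (∀ I : PrimI Ad, (e' I).val = h ⁻¹' I.val) ∧
      @Continuous (PrimF Ad) (PrimF Am) (filtTop Ad) (filtTop Am) e ∧
      @Continuous (PrimF Am) (PrimF Ad) (filtTop Am) (filtTop Ad) e.symm ∧
      @Continuous (PrimI Ad) (PrimI Am) (idlTop Ad) (idlTop Am) e' ∧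
      @Continuous (PrimI Am) (PrimI Ad) (idlTop Am) (idlTop Ad) e'.symm ∧
      (∀ (F : PrimF Ad) (I : PrimI Ad), nabla Ad F I ↔ nabla Am (e F) (e' I)) := by
    -- saturated membership transfer for filters
  have satF : ∀ (G : Set M), Am.IsPrimaryFilter G → ∀ {x y : M}, h x = h y → x ∈ G → y ∈ G := by
    intro G hG x y hxy hx
    exact hG.1.2 _ hx _ (stmt14_sat Am Ad h hqi hxy).1
  have satI : ∀ (G : Set M), Am.IsPrimaryIdeal G → ∀ {x y : M}, h x = h y → x ∈ G → y ∈ G := by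
    intro G hG x y hxy hx
    exact hG.1.2 _ hx _ (stmt14_sat Am Ad h hqi hxy).2
  let e : PrimF Ad ≃ PrimF Am :=
    { toFun := fun F => ⟨h ⁻¹' F.val, stmt14_preim_pf Am Ad h hhom hsurj hqi F.2⟩
      invFun := fun G => ⟨h '' G.val, stmt14_im_pf Am Ad h hhom hsurj hqi G.2⟩
      left_inv := by
        rintro ⟨F, hF⟩
        apply Subtype.ext
        show h '' (h ⁻¹' F) = F
        exact Set.image_preimage_eq F hsurj
      right_inv := by
        rintro ⟨G, hG⟩
        apply Subtype.ext
        show h ⁻¹' (h '' G) = G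
        ext x
        constructor
        · rintro ⟨b, hb, hbx⟩
          exact satF G hG hbx hb
        · intro hx; exact ⟨x, hx, rfl⟩ }
  let e' : PrimI Ad ≃ PrimI Am :=
    { toFun := fun F => ⟨h ⁻¹' F.val, stmt14_preim_pi Am Ad h hhom hsurj hqi F.2⟩
      invFun := fun G => ⟨h '' G.val, stmt14_im_pi Am Ad h hhom hsurj hqi G.2⟩
      left_inv := by
        rintro ⟨F, hF⟩
        apply Subtype.ext
        show h '' (h ⁻¹' F) = F
        exact Set.image_preimage_eq F hsurj
      right_inv := by
        rintro ⟨G, hG⟩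
        apply Subtype.ext
        show h ⁻¹' (h '' G) = G
        ext x
        constructor
        · rintro ⟨b, hb, hbx⟩
          exact satI G hG hbx hb
        · intro hx; exact ⟨x, hx, rfl⟩ }
  refine ⟨e, e', fun F => rfl, fun I => rfl, ?_, ?_, ?_, ?_, ?_⟩
  · refine continuous_generateFrom_iff.mpr ?_
    rintro s ⟨x, rfl⟩
    have : (e : PrimF Ad → PrimF Am) ⁻¹' (Fset Am x)ᶜ = (Fset Ad (h x))ᶜ := rfl
    rw [this]
    exact TopologicalSpace.isOpen_generateFrom_of_mem ⟨h x, rfl⟩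
  · refine continuous_generateFrom_iff.mpr ?_
    rintro s ⟨y, rfl⟩
    obtain ⟨x, rfl⟩ := hsurj y
    have : (e.symm : PrimF Am → PrimF Ad) ⁻¹' (Fset Ad (h x))ᶜ = (Fset Am x)ᶜ := by
      ext G
      simp only [Set.mem_preimage, Set.mem_compl_iff]
      show ¬ h x ∈ h '' G.val ↔ ¬ x ∈ G.val
      constructor
      · intro hn hx; exact hn ⟨x, hx, rfl⟩
      · rintro hn ⟨b, hb, hbx⟩; exact hn (satF G.val G.2 hbx hb)
    rw [this]
    exact TopologicalSpace.isOpen_generateFrom_of_mem ⟨x, rfl⟩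
  · refine continuous_generateFrom_iff.mpr ?_
    rintro s ⟨x, rfl⟩
    have : (e' : PrimI Ad → PrimI Am) ⁻¹' (Iset Am x)ᶜ = (Iset Ad (h x))ᶜ := rfl
    rw [this]
    exact TopologicalSpace.isOpen_generateFrom_of_mem ⟨h x, rfl⟩
  · refine continuous_generateFrom_iff.mpr ?_
    rintro s ⟨y, rfl⟩
    obtain ⟨x, rfl⟩ := hsurj y
    have : (e'.symm : PrimI Am → PrimI Ad) ⁻¹' (Iset Ad (h x))ᶜ = (Iset Am x)ᶜ := by
      ext G
      simp only [Set.mem_preimage, Set.mem_compl_iff]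
      show ¬ h x ∈ h '' G.val ↔ ¬ x ∈ G.val
      constructor
      · intro hn hx; exact hn ⟨x, hx, rfl⟩
      · rintro hn ⟨b, hb, hbx⟩; exact hn (satI G.val G.2 hbx hb)
    rw [this]
    exact TopologicalSpace.isOpen_generateFrom_of_mem ⟨x, rfl⟩
  · intro F I
    show F.val ∩ I.val = ∅ ↔ (h ⁻¹' F.val) ∩ (h ⁻¹' I.val) = ∅
    constructor
    · intro hFI
      rw [Set.eq_empty_iff_forall_notMem]
      rintro x ⟨hxF, hxI⟩
      exact Set.eq_empty_iff_forall_notMem.1 hFI (h x) ⟨hxF, hxI⟩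
    · intro hFI
      rw [Set.eq_empty_iff_forall_notMem]
      rintro y ⟨hyF, hyI⟩
      obtain ⟨x, rfl⟩ := hsurj y
      exact Set.eq_empty_iff_forall_notMem.1 hFI x ⟨hyF, hyI⟩
end
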